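/- For every θ = (α, β₁, β₂, σ_ε²) ∈ ℝ × ℝ × ℝ × (0,∞), almost surely (1/n) log R_n(θ) → −h₂(θ) as n → ∞, where h₂(α,β₁,β₂,σ_ε²) = (1/2) log(σ_ε²/σ₀²) + σ₀²/(2σ_ε²) + E_X[(η₀(X) − α − β₁X − β₂X²)²]/(2σ_ε²) − 1/2. -/

import Mathlib

/-!
Write `g = η₀ - (α + β₁ X + β₂ X²)` for the misfit of the quadratic model. With
`y_i = η₀(x_i) + ε_i`, the log-likelihood ratio of one observation is
`-(1/2) log (σ_ε²/σ₀²) - g(x_i)²/(2σ_ε²) - g(x_i) ε_i/σ_ε² + (1/(2σ₀²) - 1/(2σ_ε²)) ε_i²`,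
so `(1/n) log R_n(θ)` is an affine combination of three running means. The first tends to `E_X[g²]`
by the Riemann-sum condition and the last to `σ₀²` by the strong law of large numbers. For the cross
term, `g` is bounded on the compact set `𝒳`, so the `g(x_i) ε_i` are independent and uniformly
sub-Gaussian; Hoeffding's inequality and Borel–Cantelli then give `(1/n) ∑ g(x_i) ε_i → 0` a.s.
-/

open MeasureTheory Filter Finset ProbabilityTheory

/-- The `N(μ, s)` density (with variance `s`) evaluated at `y`. -/
noncomputable def normalPdf (y μ s : ℝ) : ℝ :=
  (Real.sqrt (2 * Real.pi * s))⁻¹ * Real.exp (-((y - μ) ^ 2) / (2 * s))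

/-- Expectation with respect to the uniform distribution on a set `𝒳 ⊆ ℝ`:
`E_X[g(X)] = |𝒳|⁻¹ ∫_𝒳 g(t) dt`. -/
noncomputable def EX (𝒳 : Set ℝ) (g : ℝ → ℝ) : ℝ :=
  (MeasureTheory.volume 𝒳).toReal⁻¹ * ∫ t in 𝒳, g t

/-- The Kullback–Leibler divergence rate of the quadratic model from the truth:
`h₂(α,β₁,β₂,σ_ε²) = (1/2) log(σ_ε²/σ₀²) + σ₀²/(2σ_ε²)
  + E_X[(η₀(X)-α-β₁X-β₂X²)²]/(2σ_ε²) - 1/2`. -/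
noncomputable def hQuad (𝒳 : Set ℝ) (η₀ : ℝ → ℝ) (s₀ α β₁ β₂ s : ℝ) : ℝ :=
  (1 / 2) * Real.log (s / s₀) + s₀ / (2 * s)
    + EX 𝒳 (fun t => (η₀ t - α - β₁ * t - β₂ * t ^ 2) ^ 2) / (2 * s) - 1 / 2

open Real
open scoped NNReal Topology

noncomputable def runningMean (f : ℕ → ℝ) (n : ℕ) : ℝ :=
  1 / (n : ℝ) * ∑ i ∈ Icc 1 n, f i

lemma runningMean_eq_sum_range_div (f : ℕ → ℝ) :
    runningMean f = fun n ↦ (∑ i ∈ range n, f (i + 1)) / n := by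
  ext n
  rw [runningMean, range_eq_Ico, sum_Ico_add', one_div_mul_eq_div]
  rfl

lemma runningMean_add (f g : ℕ → ℝ) :
    runningMean (fun i ↦ f i + g i) = fun n ↦ runningMean f n + runningMean g n := by
  ext n
  simp only [runningMean, sum_add_distrib, mul_add]

lemma runningMean_const_mul (a : ℝ) (f : ℕ → ℝ) :
    runningMean (fun i ↦ a * f i) = fun n ↦ a * runningMean f n := by
  ext n
  simp only [runningMean, ← mul_sum]
  ring

lemma runningMean_log {f : ℕ → ℝ} (hf : ∀ i, f i ≠ 0) :
    runningMean (fun i ↦ log (f i)) = fun n : ℕ ↦ 1 / (n : ℝ) * log (∏ i ∈ Icc 1 n, f i) := by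
  ext n
  rw [runningMean, log_prod fun i _ ↦ hf i]

lemma tendsto_runningMean_const (a : ℝ) : Tendsto (runningMean fun _ ↦ a) atTop (𝓝 a) := by
  refine tendsto_const_nhds.congr' ?_
  filter_upwards [eventually_gt_atTop 0] with n hn
  rw [runningMean, sum_const, Nat.card_Icc, add_tsub_cancel_right, nsmul_eq_mul]
  field_simp

namespace ProbabilityTheory

variable {Ω : Type*} {mΩ : MeasurableSpace Ω} {P : Measure Ω}

lemma HasSubgaussianMGF.mono {X : Ω → ℝ} {c c' : ℝ≥0} (h : HasSubgaussianMGF X c P)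
    (hc : c ≤ c') : HasSubgaussianMGF X c' P where
  integrable_exp_mul := h.integrable_exp_mul
  mgf_le t := (h.mgf_le t).trans <| exp_le_exp.mpr <| by gcongr

lemma HasLaw.hasSubgaussianMGF_of_gaussianReal {X : Ω → ℝ} {v : ℝ≥0}
    (hX : HasLaw X (gaussianReal 0 v) P) : HasSubgaussianMGF X v P := by
  refine (HasSubgaussianMGF.id_map_iff hX.aemeasurable).mp ?_
  rw [hX.map_eq]
  exact ⟨integrable_exp_mul_gaussianReal, fun t ↦ by simp [mgf_id_gaussianReal]⟩

lemma measureReal_abs_sum_range_ge_le_of_iIndepFun [IsFiniteMeasure P] {X : ℕ → Ω → ℝ}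
    (h_indep : iIndepFun X P) {c : ℝ≥0} {n : ℕ} (h_subG : ∀ i < n, HasSubgaussianMGF (X i) c P)
    {ε : ℝ} (hε : 0 ≤ ε) :
    P.real {ω | ε ≤ |∑ i ∈ range n, X i ω|} ≤ 2 * exp (-ε ^ 2 / (2 * n * c)) := by
  have h_upper := HasSubgaussianMGF.measure_sum_range_ge_le_of_iIndepFun h_indep h_subG hε
  have h_lower := HasSubgaussianMGF.measure_sum_range_ge_le_of_iIndepFun (X := fun i ω ↦ -X i ω)
    (h_indep.comp (fun _ ↦ Neg.neg) fun _ ↦ measurable_neg) (fun i hi ↦ (h_subG i hi).neg) hε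
  have h_sub : {ω | ε ≤ |∑ i ∈ range n, X i ω|}
      ⊆ {ω | ε ≤ ∑ i ∈ range n, X i ω} ∪ {ω | ε ≤ ∑ i ∈ range n, -X i ω} := by
    intro ω hω
    simpa [sum_neg_distrib, le_abs] using hω
  calc P.real {ω | ε ≤ |∑ i ∈ range n, X i ω|}
      ≤ P.real {ω | ε ≤ ∑ i ∈ range n, X i ω} + P.real {ω | ε ≤ ∑ i ∈ range n, -X i ω} :=
        (measureReal_mono h_sub).trans (measureReal_union_le _ _)
    _ ≤ 2 * exp (-ε ^ 2 / (2 * n * c)) := by linarith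

lemma ae_eventually_abs_sum_range_lt_of_iIndepFun [IsFiniteMeasure P] {X : ℕ → Ω → ℝ}
    (h_indep : iIndepFun X P) {c : ℝ≥0} (h_subG : ∀ i, HasSubgaussianMGF (X i) c P)
    {δ : ℝ} (hδ : 0 < δ) :
    ∀ᵐ ω ∂P, ∀ᶠ n : ℕ in atTop, |∑ i ∈ range n, X i ω| < δ * n := by
  -- enlarging the parameter to `c + 1 > 0` makes the Hoeffding bounds geometric in `n`
  have h_subG' (i : ℕ) : HasSubgaussianMGF (X i) (c + 1) P := (h_subG i).mono le_self_add
  set r := exp (-δ ^ 2 / (2 * (c + 1 : ℝ≥0)))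
  have h_tail (n : ℕ) :
      P {ω | δ * n ≤ |∑ i ∈ range n, X i ω|} ≤ ENNReal.ofReal (2 * r ^ n) := by
    rw [← ofReal_measureReal]
    refine ENNReal.ofReal_le_ofReal ((measureReal_abs_sum_range_ge_le_of_iIndepFun h_indep
      (fun i _ ↦ h_subG' i) (by positivity)).trans_eq ?_)
    rw [← exp_nat_mul]
    rcases n.eq_zero_or_pos with rfl | hn
    · simp
    · congr 2
      field_simp
  have h_summable : Summable fun n : ℕ ↦ 2 * r ^ n :=
    (summable_geometric_of_lt_one (exp_nonneg _) (exp_lt_one_iff.mpr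
      (div_neg_of_neg_of_pos (neg_neg_of_pos (pow_pos hδ 2)) (by positivity)))).mul_left 2
  have h_finite : ∑' n : ℕ, P {ω | δ * n ≤ |∑ i ∈ range n, X i ω|} ≠ ⊤ := by
    refine ne_top_of_le_ne_top ?_ (ENNReal.tsum_le_tsum h_tail)
    rw [← ENNReal.ofReal_tsum_of_nonneg (fun n ↦ by positivity) h_summable]
    exact ENNReal.ofReal_ne_top
  filter_upwards [ae_eventually_notMem h_finite] with ω hω
  filter_upwards [hω] with n hn
  simpa using hn

theorem ae_tendsto_sum_range_div_of_iIndepFun [IsFiniteMeasure P] {X : ℕ → Ω → ℝ}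
    (h_indep : iIndepFun X P) {c : ℝ≥0} (h_subG : ∀ i, HasSubgaussianMGF (X i) c P) :
    ∀ᵐ ω ∂P, Tendsto (fun n : ℕ ↦ (∑ i ∈ range n, X i ω) / n) atTop (𝓝 0) := by
  have h_small := ae_all_iff.mpr fun k : ℕ ↦
    ae_eventually_abs_sum_range_lt_of_iIndepFun h_indep h_subG (Nat.one_div_pos_of_nat (n := k))
  filter_upwards [h_small] with ω hω
  refine NormedAddGroup.tendsto_nhds_zero.mpr fun e he ↦ ?_
  obtain ⟨k, hk⟩ := exists_nat_one_div_lt he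
  filter_upwards [hω k, eventually_gt_atTop 0] with n hn hn_pos
  rw [norm_div, Real.norm_eq_abs, RCLike.norm_natCast, div_lt_iff₀ (by exact_mod_cast hn_pos)]
  exact hn.trans (by gcongr)

theorem ae_tendsto_runningMean_mul_of_iIndepFun [IsFiniteMeasure P] {ε : ℕ → Ω → ℝ}
    (h_indep : iIndepFun ε P) {c : ℝ≥0} (h_subG : ∀ i, HasSubgaussianMGF (ε i) c P)
    {d : ℕ → ℝ} {D : ℝ} (hd : ∀ i, |d i| ≤ D) :
    ∀ᵐ ω ∂P, Tendsto (runningMean fun i ↦ d i * ε i ω) atTop (𝓝 0) := by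
  have h_indep' : iIndepFun (fun i ω ↦ d (i + 1) * ε (i + 1) ω) P :=
    (h_indep.comp (fun i z ↦ d i * z) fun i ↦ measurable_const_mul (d i)).precomp
      (add_left_injective 1)
  have h_subG' (i : ℕ) :
      HasSubgaussianMGF (fun ω ↦ d (i + 1) * ε (i + 1) ω) (⟨D ^ 2, sq_nonneg D⟩ * c) P := by
    refine ((h_subG (i + 1)).const_mul (d (i + 1))).mono (mul_le_mul_left ?_ c)
    change d (i + 1) ^ 2 ≤ D ^ 2
    rw [← sq_abs]
    exact pow_le_pow_left₀ (abs_nonneg _) (hd _) 2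
  filter_upwards [ae_tendsto_sum_range_div_of_iIndepFun h_indep' h_subG'] with ω hω
  rwa [runningMean_eq_sum_range_div]

theorem ae_tendsto_runningMean_sq_of_iIndepFun {ε : ℕ → Ω → ℝ} {μ : Measure ℝ}
    (h_indep : iIndepFun ε P) (h_law : ∀ i, HasLaw (ε i) μ P)
    (h_int : Integrable (fun x ↦ x ^ 2) μ) :
    ∀ᵐ ω ∂P, Tendsto (runningMean fun i ↦ ε i ω ^ 2) atTop (𝓝 (∫ x, x ^ 2 ∂μ)) := by
  have h_sq : Measurable fun x : ℝ ↦ x ^ 2 := measurable_id.pow_const 2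
  set Y : ℕ → Ω → ℝ := fun i ω ↦ ε (i + 1) ω ^ 2
  have h_ident (i : ℕ) : IdentDistrib (Y i) (Y 0) P P :=
    ((h_law (i + 1)).identDistrib (h_law 1)).comp h_sq
  have h_pair : Pairwise (Function.onFun (· ⟂ᵢ[P] ·) Y) := fun i j hij ↦
    (h_indep.indepFun (by omega : i + 1 ≠ j + 1)).comp h_sq h_sq
  have h_intY : Integrable (Y 0) P := by
    rw [← (h_law 1).map_eq] at h_int
    exact (integrable_map_measure h_int.aestronglyMeasurable (h_law 1).aemeasurable).mp h_int
  have h_mean : P[Y 0] = ∫ x, x ^ 2 ∂μ :=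
    (h_law 1).integral_comp (f := fun x ↦ x ^ 2) h_sq.aestronglyMeasurable
  filter_upwards [strong_law_ae_real Y h_intY h_pair h_ident] with ω hω
  rw [h_mean] at hω
  rwa [runningMean_eq_sum_range_div]

lemma integral_sq_gaussianReal_zero (v : ℝ≥0) : ∫ x, x ^ 2 ∂gaussianReal 0 v = v := by
  rw [← variance_of_integral_eq_zero aemeasurable_id' integral_id_gaussianReal]
  exact variance_fun_id_gaussianReal

lemma integrable_sq_gaussianReal (μ : ℝ) (v : ℝ≥0) :
    Integrable (fun x ↦ x ^ 2) (gaussianReal μ v) :=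
  (memLp_id_gaussianReal 2).integrable_sq

end ProbabilityTheory

lemma log_normalPdf (y μ : ℝ) {s : ℝ} (hs : 0 < s) :
    log (normalPdf y μ s) = -log (2 * π * s) / 2 - (y - μ) ^ 2 / (2 * s) := by
  rw [normalPdf, log_mul (by positivity) (exp_pos _).ne', log_inv, log_sqrt (by positivity),
    log_exp]
  ring

lemma normalPdf_pos (y μ : ℝ) {s : ℝ} (hs : 0 < s) : 0 < normalPdf y μ s := by
  unfold normalPdf
  positivity

lemma log_normalPdf_div_normalPdf (y μ m : ℝ) {s s₀ : ℝ} (hs : 0 < s) (hs₀ : 0 < s₀) :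
    log (normalPdf y μ s / normalPdf y m s₀)
      = ((y - m) ^ 2 / s₀ - (y - μ) ^ 2 / s - log (s / s₀)) / 2 := by
  rw [log_div (normalPdf_pos y μ hs).ne' (normalPdf_pos y m hs₀).ne', log_normalPdf y μ hs,
    log_normalPdf y m hs₀, log_mul (by positivity) hs.ne', log_mul (by positivity) hs₀.ne',
    log_div hs.ne' hs₀.ne']
  field_simp
  ring

theorem quadratic_regression_equipartition_general
    (𝒳 : Set ℝ) (hXcomp : IsCompact 𝒳)
    (η₀ : ℝ → ℝ) (hη₀ : ContinuousOn η₀ 𝒳)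
    (v₀ : NNReal) (hv₀ : 0 < v₀)
    (x : ℕ → ℝ) (hx : ∀ i, x i ∈ 𝒳)
    (hriemann : ∀ g : ℝ → ℝ, ContinuousOn g 𝒳 →
      Tendsto (fun n : ℕ => (1 / (n : ℝ)) * ∑ i ∈ Finset.Icc 1 n, g (x i)) atTop
        (nhds (EX 𝒳 g)))
    {Ω : Type*} [MeasurableSpace Ω] (P : Measure Ω) [IsProbabilityMeasure P]
    (ε : ℕ → Ω → ℝ) (hεmeas : ∀ i, Measurable (ε i))
    (hεindep : iIndepFun ε P)
    (hεdist : ∀ i, P.map (ε i) = gaussianReal 0 v₀)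
    (y : ℕ → Ω → ℝ) (hy : ∀ i ω, y i ω = η₀ (x i) + ε i ω) :
    ∀ α β₁ β₂ s : ℝ, 0 < s →
      ∀ᵐ ω ∂P, Tendsto
        (fun n : ℕ => (1 / (n : ℝ)) * Real.log (∏ i ∈ Finset.Icc 1 n,
          normalPdf (y i ω) (α + β₁ * x i + β₂ * x i ^ 2) s /
            normalPdf (y i ω) (η₀ (x i)) (v₀ : ℝ)))
        atTop (nhds (-hQuad 𝒳 η₀ (v₀ : ℝ) α β₁ β₂ s)) := by
  intro α β₁ β₂ s hs
  have hv₀' : (0 : ℝ) < v₀ := hv₀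
  set g : ℝ → ℝ := fun t ↦ η₀ t - α - β₁ * t - β₂ * t ^ 2 with hg_def
  have hg : ContinuousOn g 𝒳 := by fun_prop
  obtain ⟨D, hD⟩ := hXcomp.exists_bound_of_continuousOn hg
  have h_law (i : ℕ) : HasLaw (ε i) (gaussianReal 0 v₀) P := ⟨(hεmeas i).aemeasurable, hεdist i⟩
  have h_fit : Tendsto (runningMean fun i ↦ g (x i) ^ 2) atTop (𝓝 (EX 𝒳 fun t ↦ g t ^ 2)) :=
    hriemann _ (hg.pow 2)
  have h_cross := ae_tendsto_runningMean_mul_of_iIndepFun hεindep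
    (fun i ↦ (h_law i).hasSubgaussianMGF_of_gaussianReal) (d := fun i ↦ g (x i))
    (fun i ↦ hD _ (hx i))
  have h_sq := ae_tendsto_runningMean_sq_of_iIndepFun hεindep h_law
    (integrable_sq_gaussianReal 0 v₀)
  rw [integral_sq_gaussianReal_zero] at h_sq
  filter_upwards [h_cross, h_sq] with ω h_cross h_sq
  have h_term (i : ℕ) :
      log (normalPdf (y i ω) (α + β₁ * x i + β₂ * x i ^ 2) s / normalPdf (y i ω) (η₀ (x i)) v₀)
        = -log (s / v₀) / 2 + -(1 / (2 * s)) * g (x i) ^ 2 + -(1 / s) * (g (x i) * ε i ω)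
          + (1 / (2 * v₀) - 1 / (2 * s)) * ε i ω ^ 2 := by
    rw [log_normalPdf_div_normalPdf _ _ _ hs hv₀', hy, hg_def]
    field_simp
    ring
  rw [← runningMean_log fun i ↦ (div_pos (normalPdf_pos _ _ hs) (normalPdf_pos _ _ hv₀')).ne']
  simp only [h_term, runningMean_add, runningMean_const_mul]
  convert (((tendsto_runningMean_const _).add (h_fit.const_mul _)).add
    (h_cross.const_mul _)).add (h_sq.const_mul _) using 2
  rw [hQuad]
  generalize EX 𝒳 (fun t ↦ g t ^ 2) = E
  field_simp
  ring

/-- **Asymptotic equipartition for the forward quadratic regression model.**  The true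
model is `y_i = η₀(x_i) + ε_i` with `ε_i` i.i.d. `N(0, σ₀²)`, the design `(x_i) ⊆ 𝒳`
(compact, of positive Lebesgue measure) satisfies the Riemann-sum condition, and the
quadratic model `M₂` has likelihood ratio
`R_n(θ) = ∏_{i=1}^n φ(y_i; α+β₁x_i+β₂x_i², σ_ε²)/φ(y_i; η₀(x_i), σ₀²)`.  Then for every
`θ = (α, β₁, β₂, σ_ε²)` with `σ_ε² > 0`, almost surely `(1/n) log R_n(θ) → -h₂(θ)`. -/
theorem quadratic_regression_equipartition
    (𝒳 : Set ℝ) (hXmeas : MeasurableSet 𝒳) (hXcomp : IsCompact 𝒳)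
    (hXvol : 0 < (volume 𝒳).toReal)
    (η₀ : ℝ → ℝ) (hη₀ : ContinuousOn η₀ 𝒳)
    (v₀ : NNReal) (hv₀ : 0 < v₀)
    (x : ℕ → ℝ) (hx : ∀ i, x i ∈ 𝒳)
    (hriemann : ∀ g : ℝ → ℝ, ContinuousOn g 𝒳 →
      Tendsto (fun n : ℕ => (1 / (n : ℝ)) * ∑ i ∈ Finset.Icc 1 n, g (x i)) atTop
        (nhds (EX 𝒳 g)))
    {Ω : Type*} [MeasurableSpace Ω] (P : Measure Ω) [IsProbabilityMeasure P]
    (ε : ℕ → Ω → ℝ) (hεmeas : ∀ i, Measurable (ε i))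
    (hεindep : iIndepFun ε P)
    (hεdist : ∀ i, P.map (ε i) = gaussianReal 0 v₀)
    (y : ℕ → Ω → ℝ) (hy : ∀ i ω, y i ω = η₀ (x i) + ε i ω) :
    ∀ α β₁ β₂ s : ℝ, 0 < s →
      ∀ᵐ ω ∂P, Tendsto
        (fun n : ℕ => (1 / (n : ℝ)) * Real.log (∏ i ∈ Finset.Icc 1 n,
          normalPdf (y i ω) (α + β₁ * x i + β₂ * x i ^ 2) s /
            normalPdf (y i ω) (η₀ (x i)) (v₀ : ℝ)))
        atTop (nhds (-hQuad 𝒳 η₀ (v₀ : ℝ) α β₁ β₂ s)) :=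
  quadratic_regression_equipartition_general 𝒳 hXcomp η₀ hη₀ v₀ hv₀ x hx hriemann P ε hεmeas hεindep
    hεdist y hy
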